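/- arXiv:2005.02532 — 2 statements merged into one kernel-verified Lean document; each statement's English description precedes it below -/
import Mathlib

section
/- Suppose assumption A3 holds and assumption A4(q) holds at θ₀ for some constant q > 1, with derivative element Y^{θ₀}. Suppose further that there exist an integrable ℝ^p-valued random variable G, a constant K > 0, and a function u ↦ r_u with r_u = o(|u|) as |u| → 0, such that for each u ∈ ℝ^p with θ₀ + u ∈ Θ, |E[h(X^{θ₀+u}, θ₀) − h(X^{θ₀}, θ₀) − u^⊤ G]| ≤ K (‖X^{θ₀+u} − X^{θ₀} − u^⊤ Y^{θ₀}‖_{L^q} + r_u). Then γ_{n*}^{-1}(E[h(X^{θ}, θ₀)] − E[h(X^{θ₀}, θ₀)])|_{θ=θ̂_n} − E[G]^⊤ γ_{n*}^{-1}(θ̂_n − θ₀) → 0 in probability as n → ∞. -/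
/-!
Let `φ(u) = E[h(X^{θ₀+u},θ₀)] − E[h(X^{θ₀},θ₀)] − uᵀE[G]`. The assumed bound, A4(q) and
`r_u = o(|u|)` give `φ(u) = o(|u|)` on `Θ − θ₀`. Since `γ_{n*}⁻¹(θ̂_n − θ₀)` converges in
distribution it is bounded in probability: outside an event of small probability,
`|θ̂_n − θ₀| ≤ M γ_{n*}`, which tends to `0`, so there `|φ(θ̂_n − θ₀)| ≤ c M γ_{n*}` for any
prescribed `c > 0`. Hence `γ_{n*}⁻¹ φ(θ̂_n − θ₀) → 0` in probability, and this is the claimed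
difference.
-/

open MeasureTheory Filter Topology Asymptotics
open scoped BoundedContinuousFunction

section NormRamp

variable {E : Type*} [NormedAddCommGroup E]

noncomputable def normRamp (M : ℝ) : E →ᵇ ℝ :=
  BoundedContinuousFunction.ofNormedAddCommGroup (fun x => max 0 (min 1 (‖x‖ - M)))
    (continuous_const.max (continuous_const.min (continuous_norm.sub continuous_const))) 1
    (fun x => by
      rw [Real.norm_of_nonneg (le_max_left _ _)]
      exact max_le zero_le_one (min_le_left _ _))

lemma normRamp_apply (M : ℝ) (x : E) : normRamp M x = max 0 (min 1 (‖x‖ - M)) := rfl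

lemma normRamp_nonneg (M : ℝ) (x : E) : 0 ≤ normRamp M x :=
  le_max_left _ _

lemma normRamp_le_one (M : ℝ) (x : E) : normRamp M x ≤ 1 :=
  max_le zero_le_one (min_le_left _ _)

lemma normRamp_eq_zero {M : ℝ} {x : E} (hx : ‖x‖ ≤ M) : normRamp M x = 0 :=
  max_eq_left ((min_le_right _ _).trans (sub_nonpos.2 hx))

lemma normRamp_eq_one {M : ℝ} {x : E} (hx : M + 1 ≤ ‖x‖) : normRamp M x = 1 := by
  rw [normRamp_apply, min_eq_left (by linarith), max_eq_right zero_le_one]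

variable {Ω : Type*} [MeasurableSpace Ω] (μ : Measure Ω) [IsFiniteMeasure μ]

lemma measure_add_one_le_norm_le_integral_normRamp [MeasurableSpace E] [OpensMeasurableSpace E]
    (M : ℝ) {f : Ω → E} (hf : Measurable f) :
    μ {ω | M + 1 ≤ ‖f ω‖} ≤ ENNReal.ofReal (∫ ω, normRamp M (f ω) ∂μ) := by
  have hint : Integrable (fun ω => normRamp M (f ω)) μ :=
    (integrable_const 1).mono' ((normRamp M).continuous.measurable.comp hf).aestronglyMeasurable
      (ae_of_all _ fun ω => by
        rw [Real.norm_of_nonneg (normRamp_nonneg _ _)]; exact normRamp_le_one _ _)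
  have hmarkov := mul_meas_ge_le_integral_of_nonneg
    (ae_of_all _ fun ω => normRamp_nonneg M (f ω)) hint 1
  rw [one_mul] at hmarkov
  calc μ {ω | M + 1 ≤ ‖f ω‖} ≤ μ {ω | 1 ≤ normRamp M (f ω)} :=
        measure_mono fun ω hω => (normRamp_eq_one hω).ge
    _ = ENNReal.ofReal (μ.real {ω | 1 ≤ normRamp M (f ω)}) := (ofReal_measureReal).symm
    _ ≤ ENNReal.ofReal (∫ ω, normRamp M (f ω) ∂μ) := ENNReal.ofReal_le_ofReal hmarkov

/-- No measurability of `ζ` is needed: where `normRamp M ∘ ζ` is not integrable, its integral is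
the junk value `0`. -/
lemma exists_integral_normRamp_lt (ζ : Ω → E) {r : ℝ} (hr : 0 < r) :
    ∃ M : ℝ, ∫ ω, normRamp M (ζ ω) ∂μ < r := by
  by_cases hmeas : ∀ M : ℕ, AEStronglyMeasurable (fun ω => normRamp (M : ℝ) (ζ ω)) μ
  · have hlim : Tendsto (fun M : ℕ => ∫ ω, normRamp (M : ℝ) (ζ ω) ∂μ) atTop (𝓝 (∫ _, 0 ∂μ)) := by
      refine tendsto_integral_of_dominated_convergence (fun _ => 1) hmeas (integrable_const 1)
        (fun M => ae_of_all _ fun ω => ?_) (ae_of_all _ fun ω => ?_)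
      · rw [Real.norm_of_nonneg (normRamp_nonneg _ _)]
        exact normRamp_le_one _ _
      · refine tendsto_const_nhds.congr' ?_
        filter_upwards [eventually_ge_atTop ⌈‖ζ ω‖⌉₊] with M hM
        exact (normRamp_eq_zero ((Nat.le_ceil _).trans (by exact_mod_cast hM))).symm
    rw [integral_zero] at hlim
    obtain ⟨M, hM⟩ := (hlim.eventually_lt_const hr).exists
    exact ⟨M, hM⟩
  · push Not at hmeas
    obtain ⟨M, hM⟩ := hmeas
    exact ⟨M, by rwa [integral_undef fun hint => hM hint.1]⟩

end NormRamp

section BoundedInProbability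

variable {Ω ι E : Type*} [MeasurableSpace Ω] [NormedAddCommGroup E]

def BoundedInProbability (μ : Measure Ω) (l : Filter ι) (ξ : ι → Ω → E) : Prop :=
  ∀ δ > 0, ∃ M : ℝ, ∀ᶠ i in l, μ {ω | M ≤ ‖ξ i ω‖} ≤ δ

lemma boundedInProbability_of_tendsto_integral {μ : Measure Ω} [IsFiniteMeasure μ]
    [MeasurableSpace E] [OpensMeasurableSpace E] {l : Filter ι} {ξ : ι → Ω → E} {ζ : Ω → E}
    (hξ : ∀ i, Measurable (ξ i))
    (hlim : ∀ g : E →ᵇ ℝ, Tendsto (fun i => ∫ ω, g (ξ i ω) ∂μ) l (𝓝 (∫ ω, g (ζ ω) ∂μ))) :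
    BoundedInProbability μ l ξ := by
  intro δ hδ
  obtain ⟨r, -, hr, hrδ⟩ := ENNReal.lt_iff_exists_real_btwn.1 hδ
  obtain ⟨M, hM⟩ := exists_integral_normRamp_lt μ ζ (ENNReal.ofReal_pos.1 hr)
  refine ⟨M + 1, ?_⟩
  filter_upwards [(hlim (normRamp M)).eventually_lt_const hM] with i hi
  calc μ {ω | M + 1 ≤ ‖ξ i ω‖} ≤ ENNReal.ofReal (∫ ω, normRamp M (ξ i ω) ∂μ) :=
        measure_add_one_le_norm_le_integral_normRamp μ M (hξ i)
    _ ≤ ENNReal.ofReal r := ENNReal.ofReal_le_ofReal hi.le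
    _ ≤ δ := hrδ.le

theorem tendstoInMeasure_inv_smul_of_isLittleO [NormedSpace ℝ E]
    {F : Type*} [NormedAddCommGroup F] [NormedSpace ℝ F] {μ : Measure Ω} {l : Filter ι}
    {S : Set E} {f : E → F} (hf : f =o[𝓝[S] 0] (‖·‖))
    {γ : ι → ℝ} (hγ_pos : ∀ i, 0 < γ i) (hγ : Tendsto γ l (𝓝 0))
    {U : ι → Ω → E} (hUS : ∀ i ω, U i ω ∈ S)
    (hU : BoundedInProbability μ l fun i ω => (γ i)⁻¹ • U i ω) :
    TendstoInMeasure μ (fun i ω => (γ i)⁻¹ • f (U i ω)) l 0 := by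
  rw [tendstoInMeasure_iff_norm]
  intro ε hε
  rw [ENNReal.tendsto_nhds_zero]
  intro δ hδ
  obtain ⟨M, hM⟩ := hU δ hδ
  set R := max M 1
  have hR : 0 < R := zero_lt_one.trans_le (le_max_right _ _)
  obtain ⟨η, hη, hsmall⟩ := Metric.mem_nhdsWithin_iff.1 (hf.def (div_pos hε hR))
  have hγR : Tendsto (fun i => γ i * R) l (𝓝 0) := by simpa using hγ.mul_const R
  filter_upwards [hM, hγR.eventually_lt_const hη] with i hMi hγi
  refine le_trans (measure_mono fun ω hω => ?_) hMi
  simp only [Set.mem_ofPred_eq, Pi.zero_apply, sub_zero,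
    norm_smul_of_nonneg (inv_nonneg.2 (hγ_pos i).le)] at hω ⊢
  by_contra! hlt
  have hU_lt : ‖U i ω‖ < γ i * R := by
    rw [← inv_mul_lt_iff₀ (hγ_pos i)]; exact hlt.trans_le (le_max_left _ _)
  have hf_lt : ‖f (U i ω)‖ < ε * γ i :=
    calc ‖f (U i ω)‖ ≤ ε / R * ‖U i ω‖ := by
          simpa using hsmall ⟨by simpa using hU_lt.trans hγi, hUS i ω⟩
      _ < ε / R * (γ i * R) := mul_lt_mul_of_pos_left hU_lt (div_pos hε hR)
      _ = ε * γ i := by field_simp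
  rw [le_inv_mul_iff₀ (hγ_pos i)] at hω
  linarith

end BoundedInProbability

lemma integral_sub_sub_sum_mul {Ω ι : Type*} [MeasurableSpace Ω] [Fintype ι] {μ : Measure Ω}
    {a b : Ω → ℝ} (ha : Integrable a μ) (hb : Integrable b μ) {G : Ω → ι → ℝ}
    (hG : Integrable G μ) (u : ι → ℝ) :
    ∫ ω, (a ω - b ω - ∑ i, u i * G ω i) ∂μ
      = ∫ ω, a ω ∂μ - ∫ ω, b ω ∂μ - ∑ i, u i * ∫ ω, G ω i ∂μ := by
  have hGi : ∀ i ∈ Finset.univ, Integrable (fun ω => u i * G ω i) μ :=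
    fun i _ => (hG.eval i).const_mul (u i)
  have hab : Integrable (fun ω => a ω - b ω) μ := ha.sub hb
  rw [integral_sub hab (integrable_finsetSum _ hGi), integral_sub ha hb,
    integral_finsetSum _ hGi]
  simp only [integral_const_mul]

theorem stmt_2_general
    {Ω : Type*} [MeasurableSpace Ω] (ℙ : Measure Ω) [IsProbabilityMeasure ℙ]
    {𝒳 : Type*} [NormedAddCommGroup 𝒳] [NormedSpace ℝ 𝒳]
    {p : ℕ} (Θ : Set (Fin p → ℝ)) (θ₀ : Fin p → ℝ)
    (hθ₀ : θ₀ ∈ interior Θ)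
    (X : (Fin p → ℝ) → Ω → 𝒳)
    (h : 𝒳 → (Fin p → ℝ) → ℝ)
    (hInt : ∀ θ ∈ Θ, ∀ θ' ∈ Θ, Integrable (fun ω => h (X θ ω) θ') ℙ)
    -- (A3)
    (γ : ℕ → Fin p → ℝ) (hγpos : ∀ n k, 0 < γ n k)
    (γstar : ℕ → ℝ)
    (hγstar : ∀ n, (∀ k, γ n k ≤ γstar n) ∧ ∃ k, γstar n = γ n k)
    (hγ0 : Tendsto γstar atTop (𝓝 0))
    (θhat : ℕ → Ω → (Fin p → ℝ)) (hθhatmeas : ∀ n, Measurable (θhat n))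
    (hθhatΘ : ∀ n ω, θhat n ω ∈ Θ)
    (Zstar : Ω → (Fin p → ℝ))
    (hZstar : ∀ g : BoundedContinuousFunction (Fin p → ℝ) ℝ,
      Tendsto (fun n => ∫ ω, g (fun k => (γstar n)⁻¹ * (θhat n ω k - θ₀ k)) ∂ℙ)
        atTop (𝓝 (∫ ω, g (Zstar ω) ∂ℙ)))
    -- A4(q) at θ₀ with derivative element Y^{θ₀}
    (q : ℝ)
    (Y : Ω → Fin p → 𝒳)
    (hA4 : (fun u : Fin p → ℝ =>
        (∫ ω, ‖X (θ₀ + u) ω - X θ₀ ω - ∑ i, u i • Y ω i‖ ^ q ∂ℙ) ^ (1 / q))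
      =o[𝓝 0] fun u => ‖u‖)
    -- the random variable G, the constant K, and the remainder r
    (G : Ω → Fin p → ℝ) (hGInt : Integrable G ℙ)
    (K : ℝ)
    (r : (Fin p → ℝ) → ℝ) (hr : r =o[𝓝 0] fun u => ‖u‖)
    (hbound : ∀ u : Fin p → ℝ, θ₀ + u ∈ Θ →
      |∫ ω, (h (X (θ₀ + u) ω) θ₀ - h (X θ₀ ω) θ₀ - ∑ i, u i * G ω i) ∂ℙ| ≤
        K * ((∫ ω, ‖X (θ₀ + u) ω - X θ₀ ω - ∑ i, u i • Y ω i‖ ^ q ∂ℙ) ^ (1 / q) + r u)) :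
    -- conclusion: convergence in probability to 0
    ∀ ε > 0, Tendsto (fun n => ℙ {ω |
        ε < |(γstar n)⁻¹ *
              ((∫ ω', h (X (θhat n ω) ω') θ₀ ∂ℙ) - ∫ ω', h (X θ₀ ω') θ₀ ∂ℙ)
            - ∑ i, (∫ ω', G ω' i ∂ℙ) * ((γstar n)⁻¹ * (θhat n ω i - θ₀ i))|})
      atTop (𝓝 0) := by
  intro ε hε
  have hθ₀Θ : θ₀ ∈ Θ := interior_subset hθ₀
  have hγstar_pos (n : ℕ) : 0 < γstar n := by
    obtain ⟨k, hk⟩ := (hγstar n).2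
    exact hk ▸ hγpos n k
  set φ : (Fin p → ℝ) → ℝ :=
    fun u => ∫ ω, (h (X (θ₀ + u) ω) θ₀ - h (X θ₀ ω) θ₀ - ∑ i, u i * G ω i) ∂ℙ
  have hφ : φ =o[𝓝[{u | θ₀ + u ∈ Θ}] 0] (‖·‖) := by
    refine IsBigO.trans_isLittleO ?_ (((hA4.add hr).const_mul_left K).mono nhdsWithin_le_nhds)
    refine IsBigO.of_bound 1 (eventually_nhdsWithin_of_forall fun u hu => ?_)
    simpa using (hbound u hu).trans (le_abs_self _)
  have hφ_eq (u : Fin p → ℝ) (hu : θ₀ + u ∈ Θ) : φ u =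
      ∫ ω, h (X (θ₀ + u) ω) θ₀ ∂ℙ - ∫ ω, h (X θ₀ ω) θ₀ ∂ℙ - ∑ i, u i * ∫ ω, G ω i ∂ℙ :=
    integral_sub_sub_sum_mul (hInt _ hu _ hθ₀Θ) (hInt _ hθ₀Θ _ hθ₀Θ) hGInt u
  have hθhat_sub_mem (n : ℕ) (ω : Ω) : θhat n ω - θ₀ ∈ {u | θ₀ + u ∈ Θ} := by
    simpa using hθhatΘ n ω
  have hconv := tendstoInMeasure_inv_smul_of_isLittleO hφ hγstar_pos hγ0 hθhat_sub_mem
    (boundedInProbability_of_tendsto_integral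
      (fun n => ((hθhatmeas n).sub_const θ₀).const_smul (γstar n)⁻¹) hZstar)
  rw [tendstoInMeasure_iff_norm] at hconv
  refine tendsto_of_tendsto_of_tendsto_of_le_of_le tendsto_const_nhds (hconv ε hε)
    (fun _ => zero_le) fun n => measure_mono fun ω hω => ?_
  simp only [Set.mem_ofPred_eq, Pi.zero_apply, sub_zero, smul_eq_mul, Real.norm_eq_abs] at hω ⊢
  refine le_of_lt (hω.trans_eq ?_)
  rw [hφ_eq _ (hθhat_sub_mem n ω), add_sub_cancel, mul_sub _ _ (∑ _, _), Finset.mul_sum]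
  congr 2
  exact Finset.sum_congr rfl fun i _ => by rw [Pi.sub_apply]; ring

/-- **Theorem 2.2.** Under (A3) and A4(q) with `q > 1`, if there exist an integrable
`ℝ^p`-valued random variable `G`, a constant `K > 0` and a remainder `r_u = o(|u|)` with
`|E[h(X^{θ₀+u},θ₀) − h(X^{θ₀},θ₀) − uᵀG]| ≤ K (‖X^{θ₀+u} − X^{θ₀} − uᵀY^{θ₀}‖_{L^q} + r_u)`,
then the linearization (2.2) holds with `C = E[G]`, i.e.
`γ_{n*}⁻¹ (E[h(X^θ,θ₀)] − E[h(X^{θ₀},θ₀)])|_{θ=θ̂_n} − E[G]ᵀ γ_{n*}⁻¹ (θ̂_n − θ₀) →p 0`. -/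
theorem stmt_2
    {Ω : Type*} [MeasurableSpace Ω] (ℙ : Measure Ω) [IsProbabilityMeasure ℙ]
    {𝒳 : Type*} [NormedAddCommGroup 𝒳] [NormedSpace ℝ 𝒳]
    {p : ℕ} (Θ : Set (Fin p → ℝ)) (θ₀ : Fin p → ℝ)
    (hθ₀ : θ₀ ∈ interior Θ)
    (X : (Fin p → ℝ) → Ω → 𝒳)
    (h : 𝒳 → (Fin p → ℝ) → ℝ)
    (hInt : ∀ θ ∈ Θ, ∀ θ' ∈ Θ, Integrable (fun ω => h (X θ ω) θ') ℙ)
    -- (A3)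
    (γ : ℕ → Fin p → ℝ) (hγpos : ∀ n k, 0 < γ n k)
    (γstar : ℕ → ℝ)
    (hγstar : ∀ n, (∀ k, γ n k ≤ γstar n) ∧ ∃ k, γstar n = γ n k)
    (hγ0 : Tendsto γstar atTop (𝓝 0))
    (θhat : ℕ → Ω → (Fin p → ℝ)) (hθhatmeas : ∀ n, Measurable (θhat n))
    (hθhatΘ : ∀ n ω, θhat n ω ∈ Θ)
    (Z Zstar : Ω → (Fin p → ℝ))
    (hZ : ∀ g : BoundedContinuousFunction (Fin p → ℝ) ℝ,
      Tendsto (fun n => ∫ ω, g (fun k => (γ n k)⁻¹ * (θhat n ω k - θ₀ k)) ∂ℙ)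
        atTop (𝓝 (∫ ω, g (Z ω) ∂ℙ)))
    (hZstar : ∀ g : BoundedContinuousFunction (Fin p → ℝ) ℝ,
      Tendsto (fun n => ∫ ω, g (fun k => (γstar n)⁻¹ * (θhat n ω k - θ₀ k)) ∂ℙ)
        atTop (𝓝 (∫ ω, g (Zstar ω) ∂ℙ)))
    -- A4(q) at θ₀ with derivative element Y^{θ₀}
    (q : ℝ) (hq : 1 < q)
    (Y : Ω → Fin p → 𝒳)
    (hYLq : MemLp Y (ENNReal.ofReal q) ℙ)
    (hA4 : (fun u : Fin p → ℝ =>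
        (∫ ω, ‖X (θ₀ + u) ω - X θ₀ ω - ∑ i, u i • Y ω i‖ ^ q ∂ℙ) ^ (1 / q))
      =o[𝓝 0] fun u => ‖u‖)
    -- the random variable G, the constant K, and the remainder r
    (G : Ω → Fin p → ℝ) (hGInt : Integrable G ℙ)
    (K : ℝ) (hK : 0 < K)
    (r : (Fin p → ℝ) → ℝ) (hr : r =o[𝓝 0] fun u => ‖u‖)
    (hbound : ∀ u : Fin p → ℝ, θ₀ + u ∈ Θ →
      |∫ ω, (h (X (θ₀ + u) ω) θ₀ - h (X θ₀ ω) θ₀ - ∑ i, u i * G ω i) ∂ℙ| ≤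
        K * ((∫ ω, ‖X (θ₀ + u) ω - X θ₀ ω - ∑ i, u i • Y ω i‖ ^ q ∂ℙ) ^ (1 / q) + r u)) :
    -- conclusion: convergence in probability to 0
    ∀ ε > 0, Tendsto (fun n => ℙ {ω |
        ε < |(γstar n)⁻¹ *
              ((∫ ω', h (X (θhat n ω) ω') θ₀ ∂ℙ) - ∫ ω', h (X θ₀ ω') θ₀ ∂ℙ)
            - ∑ i, (∫ ω', G ω' i ∂ℙ) * ((γstar n)⁻¹ * (θhat n ω i - θ₀ i))|})
      atTop (𝓝 0) :=
  stmt_2_general ℙ Θ θ₀ hθ₀ X h hInt γ hγpos γstar hγstar hγ0 θhat hθhatmeas hθhatΘ Zstar hZstar q Y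
    hA4 G hGInt K r hr hbound
end

section
/- Let T > 0, let U : ℝ → ℝ be twice differentiable with |U'(z)| ≤ M and |U''(z)| ≤ M for all z ∈ ℝ, let w, x : [0,T] → ℝ and y : [0,T] → ℝ^p be continuous, and let u ∈ ℝ^p. Then |∫₀^T (U(w_t) − U(x_t) − u^⊤ U'(x_t) y_t) dt| ≤ M T (‖w − x − u^⊤ y‖ + ‖w − x − u^⊤ y‖² + |u|² ‖y‖²), where ‖f‖ := sup_{t∈[0,T]} |f_t| denotes the sup norm of a path (for y, ‖y‖ := sup_{t∈[0,T]} |y_t| with |·| the Euclidean norm on ℝ^p, and (u^⊤ y)_t := u^⊤ y_t). In particular, the map x ↦ ∫₀^T U(x_t) dt admits ∫₀^T U'(x_t) y_t dt as its first-order approximation coefficient in the direction of the derivative path y. -/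
/-!
With `s = ⟪u, y_t⟫` and `r = w_t - x_t - s`, split the integrand as
`(U(w_t) - U(x_t) - U'(x_t)(w_t - x_t)) + U'(x_t) r`. The first-order Taylor remainder is at most
`M (w_t - x_t)² / 2 ≤ M (r² + s²)`, and `s² ≤ |u|² |y_t|²` by Cauchy–Schwarz, so the integrand is
bounded by `M (‖r‖ + ‖r‖² + |u|² ‖y‖²)` on `[0, T]`; the sup norms are finite by compactness.
-/

lemma ConvexOn.add_mul_sub_le_of_hasDerivAt {S : Set ℝ} {f : ℝ → ℝ} {f' a b : ℝ}
    (hf : ConvexOn ℝ S f) (ha : a ∈ S) (hb : b ∈ S) (hd : HasDerivAt f f' a) :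
    f a + f' * (b - a) ≤ f b := by
  rcases lt_trichotomy a b with hab | rfl | hba
  · have h := hf.le_slope_of_hasDerivAt ha hb hab hd
    rw [slope_def_field, le_div_iff₀ (sub_pos.2 hab)] at h
    linarith
  · simp
  · have h := hf.slope_le_of_hasDerivAt hb ha hba hd
    rw [slope_def_field, div_le_iff₀ (sub_pos.2 hba)] at h
    linarith

lemma sub_sub_mul_sub_le_of_deriv2_le {U U' U'' : ℝ → ℝ} {M : ℝ}
    (hU' : ∀ z, HasDerivAt U (U' z) z) (hU'' : ∀ z, HasDerivAt U' (U'' z) z)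
    (hM : ∀ z, U'' z ≤ M) (a b : ℝ) :
    U b - U a - U' a * (b - a) ≤ M / 2 * (b - a) ^ 2 := by
  have hd : ∀ z, HasDerivAt (fun t => M / 2 * t ^ 2 - U t) (M * z - U' z) z := fun z => by
    have := ((hasDerivAt_pow 2 z).const_mul (M / 2)).fun_sub (hU' z)
    exact this.congr_deriv (by push_cast; ring)
  have hd2 : ∀ z, HasDerivAt (fun t => M * t - U' t) (M - U'' z) z := fun z => by
    have := ((hasDerivAt_id z).const_mul M).fun_sub (hU'' z)
    exact this.congr_deriv (by simp)
  -- `t ↦ M t² / 2 - U t` is convex, so it lies above its tangent line at `a`.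
  have hconv : ConvexOn ℝ Set.univ (fun t => M / 2 * t ^ 2 - U t) :=
    convexOn_of_hasDerivWithinAt2_nonneg convex_univ
      (fun z _ => (hd z).continuousAt.continuousWithinAt)
      (fun z _ => (hd z).hasDerivWithinAt) (fun z _ => (hd2 z).hasDerivWithinAt)
      (fun z _ => sub_nonneg.2 (hM z))
  have := hconv.add_mul_sub_le_of_hasDerivAt (Set.mem_univ a) (Set.mem_univ b) (hd a)
  linarith

lemma abs_sub_sub_mul_sub_le_of_abs_deriv2_le {U U' U'' : ℝ → ℝ} {M : ℝ}
    (hU' : ∀ z, HasDerivAt U (U' z) z) (hU'' : ∀ z, HasDerivAt U' (U'' z) z)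
    (hM : ∀ z, |U'' z| ≤ M) (a b : ℝ) :
    |U b - U a - U' a * (b - a)| ≤ M / 2 * (b - a) ^ 2 := by
  have upper :=
    sub_sub_mul_sub_le_of_deriv2_le hU' hU'' (fun z => (le_abs_self _).trans (hM z)) a b
  have lower := sub_sub_mul_sub_le_of_deriv2_le (U := (-U ·)) (U' := (-U' ·)) (U'' := (-U'' ·))
    (fun z => (hU' z).neg) (fun z => (hU'' z).neg) (fun z => (neg_le_abs _).trans (hM z)) a b
  rw [abs_le]
  constructor <;> linarith

lemma abs_sub_sub_mul_le_of_abs_deriv_le {U U' U'' : ℝ → ℝ} {M : ℝ}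
    (hU' : ∀ z, HasDerivAt U (U' z) z) (hU'' : ∀ z, HasDerivAt U' (U'' z) z)
    (hM1 : ∀ z, |U' z| ≤ M) (hM2 : ∀ z, |U'' z| ≤ M) (a b s : ℝ) :
    |U b - U a - U' a * s| ≤ M * (|b - a - s| + (b - a - s) ^ 2 + s ^ 2) := by
  have taylor := abs_sub_sub_mul_sub_le_of_abs_deriv2_le hU' hU'' hM2 a b
  have hlin : |U' a * (b - a - s)| ≤ M * |b - a - s| := by
    rw [abs_mul]; exact mul_le_mul_of_nonneg_right (hM1 a) (abs_nonneg _)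
  have hsq : (b - a) ^ 2 ≤ 2 * (b - a - s) ^ 2 + 2 * s ^ 2 := by
    nlinarith [sq_nonneg (b - a - 2 * s)]
  have hM : 0 ≤ M := (abs_nonneg _).trans (hM1 a)
  calc |U b - U a - U' a * s|
      = |(U b - U a - U' a * (b - a)) + U' a * (b - a - s)| := by ring_nf
    _ ≤ M / 2 * (b - a) ^ 2 + M * |b - a - s| := (abs_add_le _ _).trans (add_le_add taylor hlin)
    _ ≤ M * (|b - a - s| + (b - a - s) ^ 2 + s ^ 2) := by nlinarith

lemma IsCompact.le_ciSup_of_continuousOn {α : Type*} [TopologicalSpace α] {s : Set α}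
    {g : α → ℝ} (hs : IsCompact s) (hg : ContinuousOn g s) {t : α} (ht : t ∈ s) :
    g t ≤ ⨆ x : s, g x := by
  refine le_ciSup (f := fun x : s => g x) ?_ ⟨t, ht⟩
  simpa only [Set.image_eq_range] using (hs.image_of_continuousOn hg).bddAbove

lemma EuclideanSpace.sum_mul_eq_inner {ι : Type*} [Fintype ι] (u v : EuclideanSpace ℝ ι) :
    ∑ i, u i * v i = inner ℝ u v := by
  simp [PiLp.inner_apply, mul_comm]

/-- **Deterministic pathwise inequality (Remark 3.1).** For `U` twice differentiable
with `|U'| ≤ M` and `|U''| ≤ M`, continuous paths `w, x : [0,T] → ℝ`,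
`y : [0,T] → ℝ^p`, and `u ∈ ℝ^p`,
`|∫₀^T (U(w_t) − U(x_t) − uᵀ U'(x_t) y_t) dt|
  ≤ M T (‖w − x − uᵀy‖ + ‖w − x − uᵀy‖² + |u|² ‖y‖²)`,
where `‖·‖` is the sup norm over `[0,T]` and `|·|` the Euclidean norm on `ℝ^p`. -/
theorem stmt_6 {p : ℕ} (T : ℝ) (hT : 0 < T)
    (U U' U'' : ℝ → ℝ) (M : ℝ)
    (hU' : ∀ z, HasDerivAt U (U' z) z)
    (hU'' : ∀ z, HasDerivAt U' (U'' z) z)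
    (hM1 : ∀ z, |U' z| ≤ M) (hM2 : ∀ z, |U'' z| ≤ M)
    (w x : ℝ → ℝ) (y : ℝ → EuclideanSpace ℝ (Fin p))
    (hw : ContinuousOn w (Set.Icc 0 T)) (hx : ContinuousOn x (Set.Icc 0 T))
    (hy : ContinuousOn y (Set.Icc 0 T))
    (u : EuclideanSpace ℝ (Fin p)) :
    |∫ t in (0:ℝ)..T, (U (w t) - U (x t) - ∑ i, u i * (U' (x t) * y t i))| ≤
      M * T * ((⨆ t : Set.Icc (0:ℝ) T, |w t - x t - ∑ i, u i * y t i|)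
        + (⨆ t : Set.Icc (0:ℝ) T, |w t - x t - ∑ i, u i * y t i|) ^ 2
        + ‖u‖ ^ 2 * (⨆ t : Set.Icc (0:ℝ) T, ‖y t‖) ^ 2) := by
  simp only [EuclideanSpace.sum_mul_eq_inner, mul_left_comm _ (U' _), ← Finset.mul_sum]
  have hM : 0 ≤ M := (abs_nonneg _).trans (hM1 0)
  set R := ⨆ t : Set.Icc (0:ℝ) T, |w t - x t - inner ℝ u (y t)|
  set Y := ⨆ t : Set.Icc (0:ℝ) T, ‖y t‖
  have hr : ContinuousOn (fun t => |w t - x t - inner ℝ u (y t)|) (Set.Icc 0 T) :=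
    ((hw.sub hx).sub (continuousOn_const.inner hy)).abs
  have hbound : ∀ t ∈ Set.uIoc 0 T, ‖U (w t) - U (x t) - U' (x t) * inner ℝ u (y t)‖ ≤
      M * (R + R ^ 2 + ‖u‖ ^ 2 * Y ^ 2) := by
    intro t htT
    have ht : t ∈ Set.Icc 0 T := Set.Ioc_subset_Icc_self (Set.uIoc_of_le hT.le ▸ htT)
    have hrR := isCompact_Icc.le_ciSup_of_continuousOn hr ht
    have hyY := isCompact_Icc.le_ciSup_of_continuousOn hy.norm ht
    have hs : |inner ℝ u (y t)| ≤ ‖u‖ * Y :=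
      (abs_real_inner_le_norm u (y t)).trans (mul_le_mul_of_nonneg_left hyY (norm_nonneg u))
    calc ‖U (w t) - U (x t) - U' (x t) * inner ℝ u (y t)‖
        ≤ M * (|w t - x t - inner ℝ u (y t)| + |w t - x t - inner ℝ u (y t)| ^ 2
            + |inner ℝ u (y t)| ^ 2) := by
          simpa only [sq_abs, Real.norm_eq_abs] using
            abs_sub_sub_mul_le_of_abs_deriv_le hU' hU'' hM1 hM2 (x t) (w t) _
      _ ≤ M * (R + R ^ 2 + ‖u‖ ^ 2 * Y ^ 2) := by
          rw [← mul_pow]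
          gcongr
  have := intervalIntegral.norm_integral_le_of_norm_le_const hbound
  rwa [Real.norm_eq_abs, sub_zero, abs_of_pos hT, mul_right_comm] at this
end
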